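/- For every even integer j ≥ 0 and all integers a, b with 1 ≤ a ≤ b such that a and b have the same parity, the rooted tree RT(0^j, a, b) is super edge-graceful. -/

import Mathlib

/-!
Edges get distinct terms among the first `q` of the sequence `1, -1, 2, -2, …`; as
`q = j + 2 + a + b` is even, these are exactly the admissible edge labels. Since the terms with
indices `2k` and `2k + 1` cancel, the indices can be arranged so that the vertex sums are distinct
terms among the first `q + 1` of `0, 1, -1, 2, -2, …`: the root gets `0`, every leaf and every
leafless child repeats its edge label, and the children with `a` and `b` leaves get the two labels
left free.
-/

/-- Edge type of the rooted tree `RT(a₀, …, a_{n-1})`: one edge from the root to each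
child `i` (`Sum.inl i`), and one edge from child `i` to each of its `a i` leaf children
(`Sum.inr ⟨i, m⟩`).  The number of edges is `q = n + ∑ i, a i`. -/
abbrev RTEdge (n : ℕ) (a : Fin n → ℕ) := (Fin n) ⊕ (Σ i : Fin n, Fin (a i))

/-- Vertex type of the rooted tree `RT(a₀, …, a_{n-1})`: the root (`none`), the children
`some (.inl i)` of the root, and the leaves `some (.inr ⟨i, m⟩)` attached to child `i`.
The number of vertices is `p = q + 1`. -/
abbrev RTVertex (n : ℕ) (a : Fin n → ℕ) := Option (RTEdge n a)

/-- The vertex labeling induced by an edge labeling `f`: each vertex gets the sum of the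
labels of the edges incident with it. -/
def vertexSum {n : ℕ} (a : Fin n → ℕ) (f : RTEdge n a → ℤ) : RTVertex n a → ℤ
  | none => ∑ i : Fin n, f (Sum.inl i)
  | some (Sum.inl i) => f (Sum.inl i) + ∑ m : Fin (a i), f (Sum.inr ⟨i, m⟩)
  | some (Sum.inr ⟨i, m⟩) => f (Sum.inr ⟨i, m⟩)

/-- The target label set for `q` objects: `{0, ±1, …, ±(q-1)/2}` if `q` is odd, and
`{±1, …, ±(q/2)}` if `q` is even. -/
noncomputable def segSet (q : ℕ) : Finset ℤ :=
  if q % 2 = 0 then (Finset.Icc (-((q / 2 : ℕ) : ℤ)) ((q / 2 : ℕ) : ℤ)).erase 0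
  else Finset.Icc (-((q / 2 : ℕ) : ℤ)) ((q / 2 : ℕ) : ℤ)

/-- The rooted tree `RT(a₀, …, a_{n-1})` is super edge-graceful: there is an edge
labeling which is a bijection onto `{0, ±1, …, ±(q-1)/2}` (`q` odd) resp.
`{±1, …, ±(q/2)}` (`q` even) whose induced vertex labeling is a bijection onto
`{0, ±1, …, ±(p-1)/2}` (`p` odd) resp. `{±1, …, ±(p/2)}` (`p` even), where
`q = n + ∑ i, a i` and `p = q + 1`. -/
def IsSEG {n : ℕ} (a : Fin n → ℕ) : Prop :=
  ∃ f : RTEdge n a → ℤ,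
    Set.BijOn f Set.univ ↑(segSet (n + ∑ i, a i)) ∧
    Set.BijOn (vertexSum a f) Set.univ ↑(segSet (n + ∑ i, a i + 1))

/-- The sequence `(0^j, a, b)` of length `j + 2`. -/
def seq2 (j a b : ℕ) : Fin (j + 2) → ℕ :=
  fun i => if (i : ℕ) < j then 0 else if (i : ℕ) = j then a else b

open Finset Function

def zigzag (m : ℕ) : ℤ :=
  if m % 2 = 0 then ((m / 2 + 1 : ℕ) : ℤ) else -((m / 2 + 1 : ℕ) : ℤ)

def zigzag₀ : ℕ → ℤ
  | 0 => 0
  | m + 1 => zigzag m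

lemma zigzag_injective : Injective zigzag := by
  intro m n h
  simp only [zigzag] at h
  split_ifs at h <;> omega

lemma zigzag_ne_zero (m : ℕ) : zigzag m ≠ 0 := by
  unfold zigzag
  split_ifs <;> omega

lemma zigzag₀_injective : Injective zigzag₀ := by
  rintro (_ | m) (_ | n) h
  · rfl
  · exact absurd h.symm (zigzag_ne_zero n)
  · exact absurd h (zigzag_ne_zero m)
  · exact congrArg (· + 1) (zigzag_injective h)

lemma zigzag_add_zigzag_succ {m : ℕ} (hm : Even m) : zigzag m + zigzag (m + 1) = 0 := by
  rw [Nat.even_iff] at hm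
  unfold zigzag
  split_ifs <;> omega

lemma sum_range_zigzag_add {d c : ℕ} (hd : Even d) (hc : Even c) :
    ∑ k ∈ range c, zigzag (d + k) = 0 := by
  obtain ⟨t, rfl⟩ := hc
  induction t with
  | zero => simp
  | succ t ih =>
    rw [show t + 1 + (t + 1) = t + t + 1 + 1 by ring, sum_range_succ, sum_range_succ, ih,
      zero_add, ← add_assoc d (t + t) 1, zigzag_add_zigzag_succ (hd.add ⟨t, rfl⟩)]

lemma card_segSet (q : ℕ) : #(segSet q) = q := by
  unfold segSet
  split_ifs
  · rw [card_erase_of_mem (by simp only [mem_Icc]; omega), Int.card_Icc]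
    omega
  · rw [Int.card_Icc]
    omega

lemma zigzag_mem_segSet {q m : ℕ} (hq : Even q) (hm : m < q) : zigzag m ∈ segSet q := by
  rw [Nat.even_iff] at hq
  unfold segSet zigzag
  rw [if_pos hq, mem_erase, mem_Icc]
  split_ifs <;> omega

lemma zigzag₀_mem_segSet {q m : ℕ} (hq : Even q) (hm : m ≤ q) : zigzag₀ m ∈ segSet (q + 1) := by
  rw [Nat.even_iff] at hq
  unfold segSet
  rw [if_neg (by omega), mem_Icc]
  rcases m with _ | m
  · simp only [zigzag₀]
    omega
  · simp only [zigzag₀, zigzag]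
    split_ifs <;> omega

lemma bijOn_univ_of_injective {α β : Type*} [Fintype α] {f : α → β} {t : Finset β}
    (hf : Injective f) (hmaps : ∀ x, f x ∈ t) (hcard : #t ≤ Fintype.card α) :
    Set.BijOn f Set.univ t := by
  have hmaps' : Set.MapsTo f (univ : Finset α) t := fun x _ => hmaps x
  have hsurj := surjOn_of_injOn_of_card_le f hmaps' hf.injOn hcard
  rw [coe_univ] at hmaps' hsurj
  exact ⟨hmaps', hf.injOn, hsurj⟩

theorem isSEG_of_zigzag_indices {n : ℕ} (A : Fin n → ℕ) (hq : Even (n + ∑ i, A i))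
    (g : RTEdge n A → ℕ) (hg : Injective g) (hg_lt : ∀ e, g e < n + ∑ i, A i)
    (g' : RTVertex n A → ℕ) (hg' : Injective g') (hg'_le : ∀ v, g' v ≤ n + ∑ i, A i)
    (hsum : ∀ v, vertexSum A (zigzag ∘ g) v = zigzag₀ (g' v)) : IsSEG A := by
  refine ⟨zigzag ∘ g, ?_, ?_⟩
  · exact bijOn_univ_of_injective (zigzag_injective.comp hg)
      (fun e => zigzag_mem_segSet hq (hg_lt e)) (by simp [card_segSet])
  · rw [funext hsum]
    exact bijOn_univ_of_injective (zigzag₀_injective.comp hg')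
      (fun v => zigzag₀_mem_segSet hq (hg'_le v)) (by simp [card_segSet])

section Construction

variable {j a b : ℕ}

lemma seq2_of_lt {i : Fin (j + 2)} (hi : (i : ℕ) < j) : seq2 j a b i = 0 := if_pos hi

lemma seq2_of_eq {i : Fin (j + 2)} (hi : (i : ℕ) = j) : seq2 j a b i = a := by
  simp [seq2, hi]

lemma seq2_of_eq_succ {i : Fin (j + 2)} (hi : (i : ℕ) = j + 1) : seq2 j a b i = b := by
  simp [seq2, hi]

lemma sum_seq2 : ∑ i, seq2 j a b i = a + b := by
  rw [Fin.sum_univ_castSucc, Fin.sum_univ_castSucc]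
  simp [seq2]

lemma lt_seq2_cases (i : Fin (j + 2)) (m : Fin (seq2 j a b i)) :
    ((i : ℕ) = j ∧ (m : ℕ) < a) ∨ ((i : ℕ) = j + 1 ∧ (m : ℕ) < b) := by
  have hm := m.isLt
  rcases lt_trichotomy (i : ℕ) j with h | h | h
  · have := seq2_of_lt (a := a) (b := b) h
    omega
  · have := seq2_of_eq (a := a) (b := b) h
    omega
  · have := seq2_of_eq_succ (a := a) (b := b) (i := i) (by omega)
    omega

/- For even `a` the leaves of the children `j` and `j + 1` take the indices `0, …, a + b - 1`, so
their labels cancel in pairs. For odd `a` the root edges to these children take `0, 1` (labels `1`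
and `-1`), and their leaf labels sum to `-2` and `2` (the unpaired leaves have indices `3` and `2`). -/

def rootEdgeIndex (j a b k : ℕ) : ℕ :=
  if k < j then a + b + 2 + k
  else if k = j then (if a % 2 = 0 then a + b else 0)
  else (if a % 2 = 0 then a + b + 1 else 1)

def leafEdgeIndex (j a k m : ℕ) : ℕ :=
  if a % 2 = 0 then (if k = j then m else a + m)
  else (if k = j then 3 + m else if m = 0 then 2 else a + 2 + m)

def childVertexIndex (j a b k : ℕ) : ℕ :=
  if k < j then a + b + 3 + k
  else if k = j then (if a % 2 = 0 then a + b + 1 else 2)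
  else (if a % 2 = 0 then a + b + 2 else 1)

def edgeIndex (j a b : ℕ) : RTEdge (j + 2) (seq2 j a b) → ℕ
  | .inl i => rootEdgeIndex j a b i
  | .inr ⟨i, m⟩ => leafEdgeIndex j a i m

def vertexIndex (j a b : ℕ) : RTVertex (j + 2) (seq2 j a b) → ℕ
  | none => 0
  | some (.inl i) => childVertexIndex j a b i
  | some (.inr ⟨i, m⟩) => leafEdgeIndex j a i m + 1

lemma edgeIndex_injective (hpar : a % 2 = b % 2) : Injective (edgeIndex j a b) := by
  rintro (i | ⟨i, m⟩) (i' | ⟨i', m'⟩) h <;>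
    simp only [edgeIndex, rootEdgeIndex, leafEdgeIndex] at h <;>
    have := i.isLt <;> have := i'.isLt
  · exact congrArg Sum.inl (Fin.ext (by split_ifs at h <;> omega))
  · have := lt_seq2_cases i' m'
    split_ifs at h <;> omega
  · have := lt_seq2_cases i m
    split_ifs at h <;> omega
  · have := lt_seq2_cases i m
    have := lt_seq2_cases i' m'
    obtain rfl : i = i' := Fin.ext (by split_ifs at h <;> omega)
    obtain rfl : m = m' := Fin.ext (by split_ifs at h <;> omega)
    rfl

lemma edgeIndex_lt (hpar : a % 2 = b % 2) (e : RTEdge (j + 2) (seq2 j a b)) :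
    edgeIndex j a b e < j + 2 + (a + b) := by
  rcases e with i | ⟨i, m⟩
  · have := i.isLt
    simp only [edgeIndex, rootEdgeIndex]
    split_ifs <;> omega
  · have := lt_seq2_cases i m
    simp only [edgeIndex, leafEdgeIndex]
    split_ifs <;> omega

lemma vertexIndex_injective (hpar : a % 2 = b % 2) : Injective (vertexIndex j a b) := by
  rintro (_ | i | ⟨i, m⟩) (_ | i' | ⟨i', m'⟩) h <;>
    simp only [vertexIndex, childVertexIndex, leafEdgeIndex] at h
  · rfl
  · have := i'.isLt
    split_ifs at h
    omega
  · omega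
  · have := i.isLt
    split_ifs at h
    omega
  · have := i.isLt
    have := i'.isLt
    exact congrArg _ (congrArg Sum.inl (Fin.ext (by split_ifs at h <;> omega)))
  · have := i.isLt
    have := lt_seq2_cases i' m'
    split_ifs at h <;> omega
  · omega
  · have := i'.isLt
    have := lt_seq2_cases i m
    split_ifs at h <;> omega
  · have := lt_seq2_cases i m
    have := lt_seq2_cases i' m'
    obtain rfl : i = i' := Fin.ext (by split_ifs at h <;> omega)
    obtain rfl : m = m' := Fin.ext (by split_ifs at h <;> omega)
    rfl

lemma vertexIndex_le (hpar : a % 2 = b % 2) (v : RTVertex (j + 2) (seq2 j a b)) :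
    vertexIndex j a b v ≤ j + 2 + (a + b) := by
  rcases v with _ | i | ⟨i, m⟩
  · exact Nat.zero_le _
  · have := i.isLt
    simp only [vertexIndex, childVertexIndex]
    split_ifs <;> omega
  · have := lt_seq2_cases i m
    simp only [vertexIndex, leafEdgeIndex]
    split_ifs <;> omega

lemma sum_zigzag_rootEdgeIndex (hj : Even j) (hpar : a % 2 = b % 2) :
    ∑ k ∈ range (j + 2), zigzag (rootEdgeIndex j a b k) = 0 := by
  rw [sum_range_succ, sum_range_succ,
    sum_congr rfl fun k hk => by rw [rootEdgeIndex, if_pos (mem_range.mp hk)],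
    sum_range_zigzag_add (Nat.even_iff.mpr (by omega)) hj, zero_add]
  by_cases ha : a % 2 = 0
  · simpa [rootEdgeIndex, ha, add_assoc] using
      zigzag_add_zigzag_succ (Nat.even_iff.mpr (show (a + b) % 2 = 0 by omega))
  · simpa [rootEdgeIndex, ha] using zigzag_add_zigzag_succ ⟨0, rfl⟩

lemma zigzag_rootEdgeIndex_add_sum_self :
    zigzag (rootEdgeIndex j a b j) + ∑ m ∈ range a, zigzag (leafEdgeIndex j a j m) =
      zigzag₀ (childVertexIndex j a b j) := by
  by_cases ha : a % 2 = 0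
  · simp only [rootEdgeIndex, leafEdgeIndex, childVertexIndex, ha, lt_irrefl, if_true, if_false]
    rw [show ∑ m ∈ range a, zigzag m = ∑ m ∈ range a, zigzag (0 + m) by simp,
      sum_range_zigzag_add ⟨0, rfl⟩ (Nat.even_iff.mpr ha), add_zero]
    rfl
  · obtain ⟨c, rfl⟩ : ∃ c, a = c + 1 := ⟨a - 1, by omega⟩
    simp only [rootEdgeIndex, leafEdgeIndex, childVertexIndex, ha, lt_irrefl, if_true, if_false]
    rw [sum_range_succ', sum_congr rfl fun m _ => by rw [show 3 + (m + 1) = 4 + m by ring],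
      sum_range_zigzag_add (by decide) (Nat.even_iff.mpr (by omega))]
    decide

lemma zigzag_rootEdgeIndex_add_sum_succ (hpar : a % 2 = b % 2) :
    zigzag (rootEdgeIndex j a b (j + 1)) + ∑ m ∈ range b, zigzag (leafEdgeIndex j a (j + 1) m) =
      zigzag₀ (childVertexIndex j a b (j + 1)) := by
  have hj : j + 1 ≠ j := by omega
  have hj' : ¬ j + 1 < j := by omega
  by_cases ha : a % 2 = 0
  · simp only [rootEdgeIndex, leafEdgeIndex, childVertexIndex, ha, hj, hj', if_true, if_false]
    rw [sum_range_zigzag_add (Nat.even_iff.mpr ha) (Nat.even_iff.mpr (by omega)), add_zero]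
    rfl
  · obtain ⟨c, rfl⟩ : ∃ c, b = c + 1 := ⟨b - 1, by omega⟩
    simp only [rootEdgeIndex, leafEdgeIndex, childVertexIndex, ha, hj, hj', if_false]
    rw [sum_range_succ', sum_congr rfl fun m _ => by
        rw [if_neg m.succ_ne_zero, show a + 2 + (m + 1) = a + 3 + m by ring],
      sum_range_zigzag_add (Nat.even_iff.mpr (by omega)) (Nat.even_iff.mpr (by omega)), if_pos rfl]
    decide

lemma vertexSum_zigzag_edgeIndex (hj : Even j) (hpar : a % 2 = b % 2)
    (v : RTVertex (j + 2) (seq2 j a b)) :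
    vertexSum (seq2 j a b) (zigzag ∘ edgeIndex j a b) v = zigzag₀ (vertexIndex j a b v) := by
  rcases v with _ | i | ⟨i, m⟩
  · exact (Fin.sum_univ_eq_sum_range (fun k => zigzag (rootEdgeIndex j a b k)) _).trans
      (sum_zigzag_rootEdgeIndex hj hpar)
  · have hchild : vertexSum (seq2 j a b) (zigzag ∘ edgeIndex j a b) (some (.inl i)) =
        zigzag (rootEdgeIndex j a b i) +
          ∑ m ∈ range (seq2 j a b i), zigzag (leafEdgeIndex j a i m) :=
      congrArg (zigzag (rootEdgeIndex j a b i) + ·)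
        (Fin.sum_univ_eq_sum_range (fun m => zigzag (leafEdgeIndex j a i m)) _)
    rw [hchild]
    rcases lt_trichotomy (i : ℕ) j with h | h | h
    · rw [seq2_of_lt h, sum_range_zero, add_zero]
      simp only [vertexIndex, rootEdgeIndex, childVertexIndex, if_pos h]
      rw [show a + b + 3 + (i : ℕ) = a + b + 2 + i + 1 by ring]
      rfl
    · rw [seq2_of_eq h]
      simp only [vertexIndex, h]
      exact zigzag_rootEdgeIndex_add_sum_self
    · have h : (i : ℕ) = j + 1 := by omega
      rw [seq2_of_eq_succ h]
      simp only [vertexIndex, h]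
      exact zigzag_rootEdgeIndex_add_sum_succ hpar
  · rfl

end Construction

theorem stmt0_general (j a b : ℕ) (hj : Even j) (hpar : a % 2 = b % 2) : IsSEG (seq2 j a b) := by
  have hq : Even (j + 2 + ∑ i, seq2 j a b i) := by
    rw [sum_seq2, Nat.even_iff]
    have := Nat.even_iff.mp hj
    omega
  refine isSEG_of_zigzag_indices _ hq (edgeIndex j a b) (edgeIndex_injective hpar) (fun e => ?_)
    (vertexIndex j a b) (vertexIndex_injective hpar) (fun v => ?_)
    (vertexSum_zigzag_edgeIndex hj hpar)
  · rw [sum_seq2]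
    exact edgeIndex_lt hpar e
  · rw [sum_seq2]
    exact vertexIndex_le hpar v

/-- For every even integer `j ≥ 0` and all integers `a, b` with `1 ≤ a ≤ b` of the same
parity, the rooted tree `RT(0^j, a, b)` is super edge-graceful. -/
theorem stmt0 (j a b : ℕ) (hj : Even j) (ha : 1 ≤ a) (hab : a ≤ b)
    (hpar : a % 2 = b % 2) : IsSEG (seq2 j a b) :=
  stmt0_general j a b hj hpar
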